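/- arXiv:1709.08928 — 3 statements merged into one kernel-verified Lean document; each statement's English description precedes it below -/
import Mathlib

section
/- (Inter-rack repair) Let H (S₁×N), K (S₂×N), G (L×M) be matrices over F_q and let X be an M×N matrix satisfying H Xᵀ = 0 and K Xᵀ Gᵀ = 0 (each row X_{m,*} satisfies H X_{m,*}ᵀ = 0, and K Xᵀ Gᵀ = 0). Suppose node j in rack 1 has failed with failure set γ_j ∋ j, and suppose (β_j, μ_j, r_j, τ) satisfies: (1) r_j lies in the row span of K; (2) μ_j = supp(r_j); (3) β_j ∈ Ω(H, r_j, j); (4) β_j ∩ γ_j = ∅; (5) τ ∈ Ω(G, 1). Then there exist coefficients c_{j,n} (n ∈ β_j) and d_{j,m,s} (m ∈ τ, s ∈ μ_j) in F_q such that X_{1,j} = Σ_{m∈τ} Σ_{s∈μ_j} d_{j,m,s} X_{m,s} + Σ_{n∈β_j} c_{j,n} X_{1,n}. -/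
/-!
Put `w := X *ᵥ rj`, so `w m = rj ⬝ᵥ X m` only involves the nodes `X m s` with `s ∈ μj`.
Since `rj` lies in the row span of `K` and `g` in that of `G`, the relation `K Xᵀ Gᵀ = 0` gives
`g ⬝ᵥ w = 0`, which recovers `w m₀` from the `w m` with `m ∈ τ` (as `g m₀ ≠ 0`). Writing the
repair vector `h = y + a • rj` with `y` in the row span of `H`, we get `h ⬝ᵥ X m₀ = a * w m₀`,
and solving for the coordinate `j` (as `h j ≠ 0`) expresses `X m₀ j` through `w m₀` and the
`X m₀ n` with `n ∈ βj`.
-/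

open Matrix

namespace Matrix

variable {l m n o R : Type*}

theorem exists_vecMul_eq_of_mem_span_range [Fintype m] [CommSemiring R] {A : Matrix m n R}
    {v : n → R} (hv : v ∈ Submodule.span R (Set.range A)) : ∃ c, c ᵥ* A = v :=
  (range_vecMulLinear A).ge hv

variable [Fintype m] [Fintype n] [CommSemiring R]

theorem dotProduct_eq_zero_of_mem_span_range {A : Matrix m n R} {x : n → R} (hx : A *ᵥ x = 0)
    {v : n → R} (hv : v ∈ Submodule.span R (Set.range A)) : v ⬝ᵥ x = 0 := by
  obtain ⟨c, rfl⟩ := exists_vecMul_eq_of_mem_span_range hv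
  rw [← dotProduct_mulVec, hx, dotProduct_zero]

theorem dotProduct_mulVec_eq_zero_of_mul_mul_eq_zero [Fintype l] [Fintype o]
    {K : Matrix l n R} {X : Matrix m n R} {G : Matrix o m R} (hKG : K * Xᵀ * Gᵀ = 0)
    {k : n → R} (hk : k ∈ Submodule.span R (Set.range K))
    {g : m → R} (hg : g ∈ Submodule.span R (Set.range G)) : g ⬝ᵥ X *ᵥ k = 0 := by
  obtain ⟨a, rfl⟩ := exists_vecMul_eq_of_mem_span_range hk
  obtain ⟨b, rfl⟩ := exists_vecMul_eq_of_mem_span_range hg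
  have hGXK : G * X * Kᵀ = 0 := by
    simpa [transpose_mul, Matrix.mul_assoc] using congrArg transpose hKG
  rw [← dotProduct_mulVec, ← mulVec_transpose, mulVec_mulVec, mulVec_mulVec, hGXK, zero_mulVec,
    dotProduct_zero]

omit [Fintype m] in
theorem dotProduct_eq_sum_of_support_subset {v x : n → R} {s : Finset n}
    (hs : ∀ i, v i ≠ 0 → i ∈ s) : v ⬝ᵥ x = ∑ i ∈ s, v i * x i :=
  (Finset.sum_subset (Finset.subset_univ s) fun i _ hi => by
    rw [not_imp_comm.mp (hs i) hi, zero_mul]).symm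

omit [Fintype m] in
theorem dotProduct_eq_sum_of_coe_eq_support {v x : n → R} {s : Finset n}
    (hs : (s : Set n) = {i | v i ≠ 0}) : v ⬝ᵥ x = ∑ i ∈ s, v i * x i :=
  dotProduct_eq_sum_of_support_subset fun i hi => by simpa [← Finset.mem_coe, hs] using hi

omit [Fintype m] in
theorem dotProduct_eq_add_sum_of_coe_eq_support_diff [DecidableEq n] {v x : n → R} {s : Finset n} {j : n}
    (hs : (s : Set n) = {i | v i ≠ 0} \ {j}) : v ⬝ᵥ x = v j * x j + ∑ i ∈ s, v i * x i := by
  have hj : j ∉ s := by simp [← Finset.mem_coe, hs]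
  rw [dotProduct_eq_sum_of_support_subset (s := insert j s), Finset.sum_insert hj]
  intro i hi
  by_cases hij : i = j
  · exact hij ▸ Finset.mem_insert_self j s
  · exact Finset.mem_insert_of_mem (by simp [← Finset.mem_coe, hs, hi, hij])

end Matrix

theorem stmt_4_general {F : Type} [Field F] {S₁ S₂ L M N : ℕ}
    (H : Matrix (Fin S₁) (Fin N) F) (K : Matrix (Fin S₂) (Fin N) F)
    (G : Matrix (Fin L) (Fin M) F) (X : Matrix (Fin M) (Fin N) F)
    (hH : ∀ m, H.mulVec (X m) = 0)
    (hKG : K * Xᵀ * Gᵀ = 0)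
    (m₀ : Fin M) (j : Fin N)
    (βj μj : Finset (Fin N)) (rj : Fin N → F) (τ : Finset (Fin M))
    -- (1) `rj` lies in the row span of `K`
    (h1 : rj ∈ Submodule.span F (Set.range K))
    -- (2) `μj = supp(rj)`
    (h2 : (↑μj : Set (Fin N)) = {s | rj s ≠ 0})
    -- (3) `βj ∈ Ω(H, rj, j)`
    (h3 : ∃ h ∈ Submodule.span F (Set.range H ∪ {rj}),
        h j ≠ 0 ∧ (↑βj : Set (Fin N)) = {i | h i ≠ 0} \ {j})
    -- (5) `τ ∈ Ω(G, m₀)`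
    (h5 : ∃ g ∈ Submodule.span F (Set.range G),
        g m₀ ≠ 0 ∧ (↑τ : Set (Fin M)) = {m | g m ≠ 0} \ {m₀}) :
    ∃ (c : Fin N → F) (d : Fin M → Fin N → F),
      X m₀ j = (∑ m ∈ τ, ∑ s ∈ μj, d m s * X m s) + ∑ n ∈ βj, c n * X m₀ n := by
  obtain ⟨h, hh, hhj, hβ⟩ := h3
  obtain ⟨g, hg, hgm₀, hτ⟩ := h5
  rw [Submodule.span_union, Submodule.mem_sup] at hh
  obtain ⟨y, hy, _, ha, hyh⟩ := hh
  obtain ⟨a, rfl⟩ := Submodule.mem_span_singleton.mp ha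
  set w := X *ᵥ rj
  have hw : ∀ m, w m = ∑ s ∈ μj, rj s * X m s := fun m =>
    (dotProduct_comm _ _).trans (dotProduct_eq_sum_of_coe_eq_support h2)
  have hrack : h ⬝ᵥ X m₀ = a * w m₀ := by
    rw [← hyh, add_dotProduct, dotProduct_eq_zero_of_mem_span_range (hH m₀) hy, smul_dotProduct,
      dotProduct_comm, zero_add, smul_eq_mul]
    rfl
  have hinter : g ⬝ᵥ w = 0 := dotProduct_mulVec_eq_zero_of_mul_mul_eq_zero hKG h1 hg
  rw [dotProduct_eq_add_sum_of_coe_eq_support_diff hβ] at hrack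
  rw [dotProduct_eq_add_sum_of_coe_eq_support_diff hτ] at hinter
  refine ⟨fun n => -(h j)⁻¹ * h n, fun m s => -a / (h j * g m₀) * g m * rj s, ?_⟩
  have hd : ∑ m ∈ τ, ∑ s ∈ μj, -a / (h j * g m₀) * g m * rj s * X m s =
      -a / (h j * g m₀) * ∑ m ∈ τ, g m * w m := by
    simp_rw [hw, Finset.mul_sum, mul_assoc]
  have hc : ∑ n ∈ βj, -(h j)⁻¹ * h n * X m₀ n = -(h j)⁻¹ * ∑ n ∈ βj, h n * X m₀ n := by
    simp_rw [Finset.mul_sum, mul_assoc]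
  rw [hd, hc]
  field_simp
  linear_combination g m₀ * hrack + a * hinter

/-- Inter-rack repair: with `H Xᵀ = 0` (rowwise) and `K Xᵀ Gᵀ = 0`,
if node `j` of rack `m₀` fails (failure set `γj ∋ j`) and `(βj, μj, rj, τ)` satisfies
the five criteria, then `X m₀ j` can be recovered as a linear combination of the nodes
`X m s` for `m ∈ τ, s ∈ μj` and of the surviving nodes `X m₀ n` for `n ∈ βj`. -/
theorem stmt_4 {F : Type} [Field F] [Fintype F] {S₁ S₂ L M N : ℕ}
    (H : Matrix (Fin S₁) (Fin N) F) (K : Matrix (Fin S₂) (Fin N) F)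
    (G : Matrix (Fin L) (Fin M) F) (X : Matrix (Fin M) (Fin N) F)
    (hH : ∀ m, H.mulVec (X m) = 0)
    (hKG : K * Xᵀ * Gᵀ = 0)
    (m₀ : Fin M) (j : Fin N) (γj : Finset (Fin N)) (hjγ : j ∈ γj)
    (βj μj : Finset (Fin N)) (rj : Fin N → F) (τ : Finset (Fin M))
    -- (1) `rj` lies in the row span of `K`
    (h1 : rj ∈ Submodule.span F (Set.range K))
    -- (2) `μj = supp(rj)`
    (h2 : (↑μj : Set (Fin N)) = {s | rj s ≠ 0})
    -- (3) `βj ∈ Ω(H, rj, j)`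
    (h3 : ∃ h ∈ Submodule.span F (Set.range H ∪ {rj}),
        h j ≠ 0 ∧ (↑βj : Set (Fin N)) = {i | h i ≠ 0} \ {j})
    -- (4) `βj ∩ γj = ∅`
    (h4 : βj ∩ γj = ∅)
    -- (5) `τ ∈ Ω(G, m₀)`
    (h5 : ∃ g ∈ Submodule.span F (Set.range G),
        g m₀ ≠ 0 ∧ (↑τ : Set (Fin M)) = {m | g m ≠ 0} \ {m₀}) :
    ∃ (c : Fin N → F) (d : Fin M → Fin N → F),
      X m₀ j = (∑ m ∈ τ, ∑ s ∈ μj, d m s * X m s) + ∑ n ∈ βj, c n * X m₀ n :=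
  stmt_4_general H K G X hH hKG m₀ j βj μj rj τ h1 h2 h3 h5
end

section
/- Let H, K, G be matrices over F_q of sizes S₁×N, S₂×N, and L×M respectively, such that the S₁+S₂ rows of H and K together are linearly independent and G has full rank L ≤ M. Then the number of M×N matrices X over F_q satisfying H Xᵀ = 0 and K Xᵀ Gᵀ = 0 equals q^{MN − M·S₁ − L·S₂}. -/
/-!
The solution set is the kernel of the linear map `X ↦ (H Xᵀ, K Xᵀ Gᵀ)` from `F^{M×N}` to
`F^{S₁×M} × F^{S₂×L}`. This map is onto: the stacked matrix `[H; K]` and `G` have full row rank,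
hence right inverses `R` and `S`, and `Y = R [A; C Sᵀ]` solves `H Y = A`, `K Y Gᵀ = C`.
By rank–nullity the kernel has dimension `MN - (M S₁ + L S₂)`.
-/

open Matrix

namespace Matrix

variable {F : Type*} [Field F] {l m n k : Type*} [Fintype n]

theorem exists_mul_eq_one_of_rank_eq_card [Fintype m] [DecidableEq m] (A : Matrix m n F)
    (hA : A.rank = Fintype.card m) : ∃ B : Matrix n m F, A * B = 1 := by
  have hsurj : LinearMap.range A.mulVecLin = ⊤ :=
    Submodule.eq_top_of_finrank_eq (hA.trans (Module.finrank_fintype_fun_eq_card F).symm)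
  obtain ⟨g, hg⟩ := A.mulVecLin.exists_rightInverse_of_surjective hsurj
  classical
  refine ⟨LinearMap.toMatrix' g, Matrix.toLin'.injective ?_⟩
  rw [Matrix.toLin'_mul, Matrix.toLin'_toMatrix', Matrix.toLin'_one]
  exact hg

theorem surjective_mul_prod_mul_mul_transpose {m₁ m₂ : Type*} [Fintype m₁] [Fintype m₂]
    [DecidableEq m₁] [DecidableEq m₂] [Fintype l] [DecidableEq l] [Fintype k]
    (H : Matrix m₁ n F) (K : Matrix m₂ n F) (G : Matrix l k F)
    (hHK : LinearIndependent F (Sum.elim H K)) (hG : G.rank = Fintype.card l) :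
    Function.Surjective fun Y : Matrix n k F => (H * Y, K * Y * Gᵀ) := by
  obtain ⟨R, hR⟩ := (fromRows H K).exists_mul_eq_one_of_rank_eq_card hHK.rank_matrix
  obtain ⟨S, hS⟩ := G.exists_mul_eq_one_of_rank_eq_card hG
  rintro ⟨A, C⟩
  refine ⟨R * fromRows A (C * Sᵀ), ?_⟩
  have hY : fromRows H K * (R * fromRows A (C * Sᵀ)) = fromRows A (C * Sᵀ) := by
    rw [← Matrix.mul_assoc, hR, Matrix.one_mul]
  rw [fromRows_mul] at hY
  obtain ⟨hH, hK⟩ := fromRows_inj hY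
  refine Prod.ext hH ?_
  simp only [hK, Matrix.mul_assoc, ← transpose_mul, hS, transpose_one, Matrix.mul_one]

theorem mul_transpose_eq_zero_iff {R : Type*} [NonUnitalNonAssocSemiring R]
    (A : Matrix l n R) (B : Matrix m n R) : A * Bᵀ = 0 ↔ ∀ i, A *ᵥ B i = 0 := by
  simp only [← Matrix.ext_iff, funext_iff, Matrix.mul_apply, Matrix.mulVec, dotProduct,
    transpose_apply, zero_apply, Pi.zero_apply]
  exact forall_comm

end Matrix

theorem LinearMap.natCard_ker_of_surjective {K V W : Type*} [Field K] [AddCommGroup V]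
    [Module K V] [FiniteDimensional K V] [AddCommGroup W] [Module K W]
    (f : V →ₗ[K] W) (hf : Function.Surjective f) :
    Nat.card (LinearMap.ker f) = Nat.card K ^ (Module.finrank K V - Module.finrank K W) := by
  rw [Module.natCard_eq_pow_finrank (K := K), ← f.finrank_range_add_finrank_ker,
    LinearMap.range_eq_top.2 hf, finrank_top, Nat.add_sub_cancel_left]

theorem stmt_6_general {F : Type} [Field F] [Fintype F] {S₁ S₂ L M N : ℕ}
    (H : Matrix (Fin S₁) (Fin N) F) (K : Matrix (Fin S₂) (Fin N) F)
    (G : Matrix (Fin L) (Fin M) F)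
    (hHK : LinearIndependent F (Sum.elim H K : Fin S₁ ⊕ Fin S₂ → Fin N → F))
    (hG : G.rank = L) :
    Nat.card {X : Matrix (Fin M) (Fin N) F //
        (∀ m, H.mulVec (X m) = 0) ∧ K * Xᵀ * Gᵀ = 0} =
      Fintype.card F ^ (M * N - (M * S₁ + L * S₂)) := by
  let Φ : Matrix (Fin M) (Fin N) F →ₗ[F] Matrix (Fin S₁) (Fin M) F × Matrix (Fin S₂) (Fin L) F :=
    ((mulLeftLinearMap (Fin M) F H).prod
      (mulRightLinearMap (Fin S₂) F Gᵀ ∘ₗ mulLeftLinearMap (Fin M) F K)) ∘ₗ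
      (transposeLinearEquiv (Fin M) (Fin N) F F).toLinearMap
  have hΦ : Function.Surjective Φ :=
    (surjective_mul_prod_mul_mul_transpose H K G hHK (by rwa [Fintype.card_fin])).comp
      (transposeLinearEquiv (Fin M) (Fin N) F F).surjective
  have hker (X : Matrix (Fin M) (Fin N) F) :
      X ∈ LinearMap.ker Φ ↔ (∀ m, H *ᵥ X m = 0) ∧ K * Xᵀ * Gᵀ = 0 := by
    simp [Φ, mul_transpose_eq_zero_iff]
  rw [← Nat.card_congr (Equiv.subtypeEquivRight hker), LinearMap.natCard_ker_of_surjective Φ hΦ]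
  simp only [Nat.card_eq_fintype_card, Module.finrank_matrix, Fintype.card_fin,
    Module.finrank_self, mul_one, Module.finrank_prod]
  rw [Nat.mul_comm S₁, Nat.mul_comm S₂]

/-- if the rows of `H` and `K` together are linearly independent and `G`
has full rank `L ≤ M`, the number of `M × N` matrices `X` with `H Xᵀ = 0` and
`K Xᵀ Gᵀ = 0` is exactly `q^(MN - M S₁ - L S₂)`. -/
theorem stmt_6 {F : Type} [Field F] [Fintype F] {S₁ S₂ L M N : ℕ}
    (H : Matrix (Fin S₁) (Fin N) F) (K : Matrix (Fin S₂) (Fin N) F)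
    (G : Matrix (Fin L) (Fin M) F)
    (hHK : LinearIndependent F (Sum.elim H K : Fin S₁ ⊕ Fin S₂ → Fin N → F))
    (hG : G.rank = L) (hLM : L ≤ M) :
    Nat.card {X : Matrix (Fin M) (Fin N) F //
        (∀ m, H.mulVec (X m) = 0) ∧ K * Xᵀ * Gᵀ = 0} =
      Fintype.card F ^ (M * N - (M * S₁ + L * S₂)) :=
  stmt_6_general H K G hHK hG
end

section
/- Let C ⊆ F_q^N × F_q^N be a linear code with dual C^⊥ (with respect to the standard bilinear form on F_q^{2N}). Then the support enumerators satisfy the MacWilliams-type identity: for all w, s ⊆ {1,…,N}, |C| · Λ_{C^⊥}(w,s) = Σ_{w′,s′ ⊆ {1,…,N}} Λ_C(w′,s′) · Π_{j=1}^{N} κ_q(w′_j, w_j) κ_q(s′_j, s_j), where κ_q(u,v) = 1 if v = 0; κ_q(u,v) = q−1 if u = 0 and v = 1; and κ_q(u,v) = −1 otherwise. -/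
open Matrix

/-- The factor `κ_q(u,v)`: here `u,v` are the indicator values `j ∈ w'`, `j ∈ w`. -/
def kappa {N : ℕ} (q : ℕ) (w' w : Finset (Fin N)) (j : Fin N) : ℤ :=
  if j ∉ w then 1 else if j ∉ w' then (q : ℤ) - 1 else -1

/-- The support enumerator `Λ_D(w,s)` of a set `D` of pairs of vectors. -/
noncomputable def suppEnum {F : Type} [Field F] [Fintype F] {N : ℕ}
    (D : Set ((Fin N → F) × (Fin N → F))) (w s : Finset (Fin N)) : ℕ :=
  Nat.card {p : (Fin N → F) × (Fin N → F) //
    p ∈ D ∧ {i | p.1 i ≠ 0} = (↑w : Set (Fin N)) ∧ {i | p.2 i ≠ 0} = (↑s : Set (Fin N))}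


/-!
Fix a primitive additive character `ψ` of `F_q` with values in a field of characteristic zero.
For a vector `x`, the sum `∑_{c ∈ C} ψ(⟨x, c⟩)` equals `|C|` if `x ∈ C^⊥` and `0` otherwise, so
summing it over all `x` of support `(w, s)` gives `|C| · Λ_{C^⊥}(w, s)`. Exchanging the two sums,
the sum over `x` factorises over the coordinates, and the `j`-th factor is a sum of `ψ(a c_j)` over
`a = 0` (if `j ∉ w`) or over `a ≠ 0` (if `j ∈ w`), which is `1`, `q - 1` or `-1`: exactly
`κ_q`. Grouping the codewords `c` by their support gives the right-hand side. Both sides are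
integers, so the identity in the characteristic-zero field descends to `ℤ`.
-/

open Finset

namespace AddChar

variable {A M : Type*} [AddCommMonoid A] [CommMonoid M]

theorem map_sum_eq_prod (ψ : AddChar A M) {ι : Type*} (s : Finset ι) (f : ι → A) :
    ψ (∑ i ∈ s, f i) = ∏ i ∈ s, ψ (f i) := by
  induction s using Finset.cons_induction with
  | empty => simp
  | cons a s _ ih => rw [sum_cons, prod_cons, map_add_eq_mul, ih]

variable {F K : Type*} [Field F] [Field K] {ψ : AddChar F K}

theorem IsPrimitive.sum_submodule_linearMap {V : Type*} [AddCommGroup V] [Module F V]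
    (hψ : ψ.IsPrimitive) (C : Submodule F V) [Fintype C] (f : V →ₗ[F] F)
    [Decidable (∀ c ∈ C, f c = 0)] :
    ∑ c : C, ψ (f c) = if ∀ c ∈ C, f c = 0 then (Nat.card C : K) else 0 := by
  classical
  let φ : AddChar C K := ψ.compAddMonoidHom (f.comp C.subtype).toAddMonoidHom
  have hφ : φ = 0 ↔ ∀ c ∈ C, f c = 0 := by
    refine ⟨fun h c hc => by_contra fun hfc => ?_, fun h => ?_⟩
    · obtain ⟨t, ht⟩ := ne_one_iff.mp (hψ hfc)
      refine ht ?_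
      simpa [φ, mul_comm] using DFunLike.congr_fun h ⟨t • c, C.smul_mem t hc⟩
    · ext c
      simp [φ, h c c.2]
  calc ∑ c : C, ψ (f c) = ∑ c, φ c := rfl
    _ = if φ = 0 then (Fintype.card C : K) else 0 := sum_eq_ite φ
    _ = _ := by simp only [hφ, Nat.card_eq_fintype_card]

theorem IsPrimitive.sum_compl_zero_mul [Fintype F] [DecidableEq F] (hψ : ψ.IsPrimitive) (b : F) :
    ∑ a ∈ {0}ᶜ, ψ (a * b) = if b = 0 then (Fintype.card F : K) - 1 else -1 := by
  have h := sum_mulShift b hψ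
  rw [← sum_compl_add_sum {0}, sum_singleton, zero_mul, map_zero_eq_one] at h
  rw [eq_sub_of_add_eq h]
  split_ifs <;> simp

end AddChar

theorem FiniteField.exists_isPrimitive_addChar (F : Type*) [Field F] [Finite F] :
    ∃ (K : Type) (_ : Field K) (_ : CharZero K) (ψ : AddChar F K), ψ.IsPrimitive := by
  have hF : ringChar ℂ ≠ ringChar F := by
    rw [ringChar.eq_zero]
    exact (CharP.char_is_prime F _).ne_zero.symm
  let ψ := AddChar.FiniteField.primitiveChar F ℂ hF
  exact ⟨_, inferInstance, charZero_of_injective_algebraMap (algebraMap ℂ _).injective,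
    ψ.char, ψ.prim⟩

section Support

variable {ι F : Type*} [Fintype ι] [Zero F] [DecidableEq F]

def finsetSupport (x : ι → F) : Finset ι := {i | x i ≠ 0}

theorem finsetSupport_eq_iff (x : ι → F) (w : Finset ι) :
    finsetSupport x = w ↔ {i | x i ≠ 0} = (↑w : Set ι) := by
  rw [← coe_inj, finsetSupport, coe_filter]
  simp

variable [Fintype F] [DecidableEq ι]

def vectorsWithSupport (w : Finset ι) : Finset (ι → F) :=
  Fintype.piFinset fun j => if j ∈ w then {0}ᶜ else {0}

theorem mem_vectorsWithSupport {w : Finset ι} {x : ι → F} :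
    x ∈ vectorsWithSupport w ↔ finsetSupport x = w := by
  rw [vectorsWithSupport, Fintype.mem_piFinset, finsetSupport_eq_iff, Set.ext_iff]
  refine forall_congr' fun j => ?_
  by_cases h : j ∈ w <;> simp [h]

end Support

theorem AddChar.IsPrimitive.sum_vectorsWithSupport_dotProduct {F K : Type*} [Field F]
    [Fintype F] [DecidableEq F] [Field K] {ψ : AddChar F K} (hψ : ψ.IsPrimitive) {N : ℕ}
    (w : Finset (Fin N)) (v : Fin N → F) :
    ∑ x ∈ vectorsWithSupport w, ψ (x ⬝ᵥ v) =
      ∏ j, (kappa (Fintype.card F) (finsetSupport v) w j : K) := by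
  simp only [vectorsWithSupport, dotProduct, ψ.map_sum_eq_prod]
  refine (prod_univ_sum _ fun j a => ψ (a * v j)).symm.trans (prod_congr rfl fun j _ => ?_)
  by_cases hw : j ∈ w
  · rw [if_pos hw, hψ.sum_compl_zero_mul]
    by_cases hv : v j = 0 <;> simp [kappa, finsetSupport, hw, hv]
  · simp [kappa, hw]

section SuppEnum

variable {F : Type} [Field F] [Fintype F] [DecidableEq F] {N : ℕ}
  (D : Set ((Fin N → F) × (Fin N → F))) [DecidablePred (· ∈ D)]

theorem suppEnum_eq_card_filter (w s : Finset (Fin N)) :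
    suppEnum D w s = #{p | p ∈ D ∧ finsetSupport p.1 = w ∧ finsetSupport p.2 = s} := by
  classical
  rw [suppEnum, Nat.card_eq_fintype_card, Fintype.card_subtype]
  simp only [finsetSupport_eq_iff]

theorem suppEnum_eq_card_filter_vectorsWithSupport (w s : Finset (Fin N)) :
    suppEnum D w s = #{p ∈ vectorsWithSupport w ×ˢ vectorsWithSupport s | p ∈ D} := by
  rw [suppEnum_eq_card_filter]
  congr 1
  ext p
  simp only [mem_filter, mem_univ, mem_product, mem_vectorsWithSupport, true_and]
  tauto

theorem sum_mem_eq_sum_suppEnum_mul {R : Type*} [CommSemiring R]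
    (g : Finset (Fin N) → Finset (Fin N) → R) :
    ∑ p with p ∈ D, g (finsetSupport p.1) (finsetSupport p.2)
      = ∑ w', ∑ s', suppEnum D w' s' * g w' s' := by
  let supports (p : (Fin N → F) × (Fin N → F)) := (finsetSupport p.1, finsetSupport p.2)
  refine (sum_fiberwise' _ supports fun q => g q.1 q.2).symm.trans ?_
  rw [Fintype.sum_prod_type]
  refine sum_congr rfl fun w' _ => sum_congr rfl fun s' _ => ?_
  rw [sum_const, nsmul_eq_mul, suppEnum_eq_card_filter, filter_filter]
  simp only [supports, Prod.ext_iff]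

end SuppEnum

/-- MacWilliams-type identity for support enumerators:
`|C| ⬝ Λ_{C⊥}(w,s) = Σ_{w',s'} Λ_C(w',s') Π_j κ_q(w'_j,w_j) κ_q(s'_j,s_j)`. -/
theorem stmt_13 {F : Type} [Field F] [Fintype F] {N : ℕ}
    (C : Submodule F ((Fin N → F) × (Fin N → F))) (w s : Finset (Fin N)) :
    (Nat.card C : ℤ) *
        suppEnum {p | ∀ c ∈ C, p.1 ⬝ᵥ c.1 + p.2 ⬝ᵥ c.2 = 0} w s =
      ∑ w' : Finset (Fin N), ∑ s' : Finset (Fin N),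
        (suppEnum (↑C : Set ((Fin N → F) × (Fin N → F))) w' s' : ℤ) *
          ∏ j : Fin N,
            kappa (Fintype.card F) w' w j * kappa (Fintype.card F) s' s j := by
  classical
  obtain ⟨K, _, _, ψ, hψ⟩ := FiniteField.exists_isPrimitive_addChar F
  apply Int.cast_injective (α := K)
  push_cast
  let B (x : (Fin N → F) × (Fin N → F)) : _ →ₗ[F] F :=
    (dotProductBilin F F x.1).coprod (dotProductBilin F F x.2)
  let g (w' s' : Finset (Fin N)) : K :=
    ∏ j, (kappa (Fintype.card F) w' w j * kappa (Fintype.card F) s' s j : K)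
  calc (Nat.card C : K) * suppEnum {p | ∀ c ∈ C, p.1 ⬝ᵥ c.1 + p.2 ⬝ᵥ c.2 = 0} w s
      = ∑ x ∈ vectorsWithSupport w ×ˢ vectorsWithSupport s, ∑ c : C, ψ (B x c) := by
        simp only [hψ.sum_submodule_linearMap, sum_ite, sum_const_zero, add_zero, sum_const,
          nsmul_eq_mul, suppEnum_eq_card_filter_vectorsWithSupport, mul_comm]
        rfl
    _ = ∑ c : C, (∑ x ∈ vectorsWithSupport w, ψ (x ⬝ᵥ c.1.1)) *
          ∑ y ∈ vectorsWithSupport s, ψ (y ⬝ᵥ c.1.2) := by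
        rw [sum_comm]
        simp [B, sum_mul_sum, sum_product, AddChar.map_add_eq_mul]
    _ = ∑ c : C, g (finsetSupport c.1.1) (finsetSupport c.1.2) := by
        simp only [hψ.sum_vectorsWithSupport_dotProduct, g, prod_mul_distrib]
    _ = ∑ c with c ∈ (C : Set ((Fin N → F) × (Fin N → F))),
          g (finsetSupport c.1) (finsetSupport c.2) :=
        (sum_subtype (p := (· ∈ C)) _ mem_filter_univ fun c =>
          g (finsetSupport c.1) (finsetSupport c.2)).symm
    _ = _ := sum_mem_eq_sum_suppEnum_mul _ g
end
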